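/- Let (G=(V,E), u, c, k) be a feasible Cap-k-ECSS instance with capacities u_e ∈ {1,…,k}, optimal value OPT, and u_max = max_{e∈E} u_e. Fix r ∈ V and let D be the directed multigraph obtained from G by replacing every edge xy ∈ E by u_{xy} bidirected pairs of arcs, each arc arising from an edge e having cost c_e. Then D contains an r-rooted k-arborescence, and for any minimum-cost r-rooted k-arborescence T' in D, the edge set F' = { e ∈ E : at least one arc arising from e is in T' } is feasible for the Cap-k-ECSS instance and satisfies c(F') ≤ min(k, 2·u_max)·OPT. -/

import Mathlib

/-!
The full reduction for Cap-k-ECSS: if the instance is feasible with optimal value `OPT`,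
then the digraph `D` obtained by replacing each edge `e` by `u e` bidirected pairs of
arcs contains an `r`-rooted `k`-arborescence, and for any minimum-cost such
arborescence `T'`, the induced edge set `F'` is feasible for the Cap-k-ECSS instance
with `c(F') ≤ min(k, 2·u_max)·OPT`.

Arcs are modeled by triples `(e, i, b) : E × Fin k × Bool` with copy index `i < u e`
and orientation `b`.
-/

/-- The set of edges of `F` having exactly one endpoint in `S`, i.e. `F ∩ δ(S)`. -/
def cutEdges {V E : Type*} [DecidableEq V] (ends : E → V × V) (F : Finset E)
    (S : Finset V) : Finset E :=
  F.filter fun e => ¬(((ends e).1 ∈ S) ↔ ((ends e).2 ∈ S))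

/-- `F` is feasible for the Cap-k-ECSS instance. -/
def CapFeasible {V E : Type*} [Fintype V] [DecidableEq V] (ends : E → V × V)
    (u : E → ℕ) (k : ℕ) (F : Finset E) : Prop :=
  ∀ R : Finset V, R.Nonempty → R ≠ Finset.univ → k ≤ ∑ e ∈ cutEdges ends F R, u e

/-- Acyclicity of the underlying undirected multigraph of an arc set. -/
def UndirAcyclic {W A : Type*} [DecidableEq W] (arcs : A → W × W) (T : Finset A) : Prop :=
  ∀ T' ⊆ T, T'.Nonempty →
    T'.card < ((T'.image fun a => (arcs a).1) ∪ (T'.image fun a => (arcs a).2)).card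

/-- `T` is an `r`-rooted arborescence. -/
def IsArborescence {W A : Type*} [DecidableEq W] (arcs : A → W × W) (r : W)
    (T : Finset A) : Prop :=
  UndirAcyclic arcs T ∧
    ∀ v : W, Relation.ReflTransGen (fun x y => ∃ a ∈ T, arcs a = (x, y)) r v

/-- `T` is an `r`-rooted `k`-arborescence: a union of `k` arc-disjoint `r`-rooted
arborescences. -/
def IsKArborescence {W A : Type*} [DecidableEq W] [DecidableEq A] (arcs : A → W × W)
    (r : W) (k : ℕ) (T : Finset A) : Prop :=
  ∃ P : Fin k → Finset A,
    (∀ i, IsArborescence arcs r (P i)) ∧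
    (∀ i j, i ≠ j → Disjoint (P i) (P j)) ∧
    Finset.univ.biUnion P = T

/-- The arc `(e, i, b)` arising from edge `e`: `b` chooses the orientation. -/
def capArcEnds {V E : Type*} (ends : E → V × V) (k : ℕ) (a : E × Fin k × Bool) :
    V × V :=
  if a.2.2 then ends a.1 else ((ends a.1).2, (ends a.1).1)

/-!
Replacing each edge `e` by `u e` bidirected pairs turns the cut condition of Cap-k-ECSS for an
edge set `F` into the condition that every `r`-cut `δ⁺(T)` (`r ∈ T ≠ V`) of the arcs over `F`
has at least `k` arcs, and conversely. By Edmonds' branching theorem the arcs over an optimal `F`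
contain an `r`-rooted `k`-arborescence. It costs at most `min(k, 2 u_max) · c(F)`: each of its
arborescences uses at most one arc over an edge `e`, and there are only `2 u_e` arcs over `e`.
A minimum-cost `k`-arborescence costs no more, and its edge set is feasible since each of its
`k` arborescences crosses every `r`-cut.

Edmonds' theorem is proved by Lovász's argument: grow one arborescence arc by arc, each time
choosing an arc after whose removal the remaining arcs still meet every `r`-cut `k - 1` times;
such an arc exists by uncrossing a maximal tight set with the submodularity of `|δ⁺|`.
-/

open Finset in
lemma Finset.sum_comp_le_mul_sum_image {ι κ R : Type*} [DecidableEq κ] [Semiring R]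
    [PartialOrder R] [IsOrderedRing R] {s : Finset ι} {g : ι → κ} {f : κ → R} {m : ℕ}
    (hf : ∀ b ∈ s.image g, 0 ≤ f b) (hg : ∀ b ∈ s.image g, #{a ∈ s | g a = b} ≤ m) :
    ∑ a ∈ s, f (g a) ≤ m * ∑ b ∈ s.image g, f b := by
  rw [sum_comp, mul_sum]
  refine sum_le_sum fun b hb => ?_
  rw [nsmul_eq_mul]
  exact mul_le_mul_of_nonneg_right (Nat.mono_cast (hg b hb)) (hf b hb)

section Arborescence

open Finset Relation

variable {W A : Type*} [DecidableEq W] {arcs : A → W × W} {r : W} {k : ℕ}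

variable (arcs) in
def outArcs (S : Finset A) (T : Finset W) : Finset A :=
  {a ∈ S | (arcs a).1 ∈ T ∧ (arcs a).2 ∉ T}

variable (arcs) in
def endpoints (T : Finset A) : Finset W :=
  T.image (fun a => (arcs a).1) ∪ T.image (fun a => (arcs a).2)

lemma mem_outArcs {S : Finset A} {T : Finset W} {a : A} :
    a ∈ outArcs arcs S T ↔ a ∈ S ∧ (arcs a).1 ∈ T ∧ (arcs a).2 ∉ T :=
  mem_filter

lemma outArcs_mono {S S' : Finset A} (h : S ⊆ S') (T : Finset W) :
    outArcs arcs S T ⊆ outArcs arcs S' T :=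
  filter_subset_filter _ h

variable (arcs) in
lemma card_outArcs_union_add_card_outArcs_inter_le (S : Finset A) (T T' : Finset W) :
    #(outArcs arcs S (T ∪ T')) + #(outArcs arcs S (T ∩ T')) ≤
      #(outArcs arcs S T) + #(outArcs arcs S T') := by
  simp only [outArcs, card_filter, ← sum_add_distrib]
  refine sum_le_sum fun a _ => ?_
  by_cases h1 : (arcs a).1 ∈ T <;> by_cases h2 : (arcs a).1 ∈ T' <;>
    by_cases h3 : (arcs a).2 ∈ T <;> by_cases h4 : (arcs a).2 ∈ T' <;>
    simp [h1, h2, h3, h4]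

lemma exists_mem_outArcs_of_card_lt {S : Finset A} {X Y : Finset W} (hXY : X ⊆ Y)
    (h : #(outArcs arcs S X) < #(outArcs arcs S Y)) :
    ∃ a ∈ outArcs arcs S Y, (arcs a).1 ∉ X := by
  by_contra! hX
  refine h.not_ge (card_le_card fun a ha => ?_)
  obtain ⟨haS, -, hhead⟩ := mem_outArcs.mp ha
  exact mem_outArcs.mpr ⟨haS, hX a ha, fun h => hhead (hXY h)⟩

lemma outArcs_nonempty_of_reflTransGen {P : Finset A} {T : Finset W} {r w : W}
    (h : ReflTransGen (fun x y => ∃ a ∈ P, arcs a = (x, y)) r w) (hr : r ∈ T) (hw : w ∉ T) :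
    (outArcs arcs P T).Nonempty := by
  induction h with
  | refl => exact absurd hr hw
  | @tail v w _ hvw ih =>
    by_cases hv : v ∈ T
    · obtain ⟨a, ha, hvw⟩ := hvw
      exact ⟨a, mem_outArcs.mpr ⟨ha, by simp [hvw, hv, hw]⟩⟩
    · exact ih hv

lemma endpoints_mono {T T' : Finset A} (h : T ⊆ T') : endpoints arcs T ⊆ endpoints arcs T' :=
  union_subset_union (image_subset_image h) (image_subset_image h)

lemma endpoints_singleton (a : A) : endpoints arcs {a} = {(arcs a).1, (arcs a).2} := by
  rw [endpoints, image_singleton, image_singleton, ← insert_eq]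

lemma undirAcyclic_iff {T : Finset A} :
    UndirAcyclic arcs T ↔ ∀ T' ⊆ T, T'.Nonempty → #T' < #(endpoints arcs T') :=
  Iff.rfl

lemma UndirAcyclic.insert_of_notMem_endpoints [DecidableEq A] {F : Finset A} {a : A}
    (h : UndirAcyclic arcs F) (hloop : (arcs a).1 ≠ (arcs a).2)
    (hhead : (arcs a).2 ∉ endpoints arcs F) :
    UndirAcyclic arcs (insert a F) := by
  rw [undirAcyclic_iff] at h ⊢
  intro T' hT' hne
  by_cases ha : a ∈ T'
  · have hsub : T'.erase a ⊆ F := fun x hx =>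
      (mem_insert.mp (hT' (mem_of_mem_erase hx))).resolve_left (ne_of_mem_erase hx)
    have hgrow : insert (arcs a).2 (endpoints arcs (T'.erase a)) ⊆ endpoints arcs T' :=
      insert_subset (mem_union_right _ (mem_image_of_mem _ ha))
        (endpoints_mono (erase_subset a T'))
    have hcard := card_le_card hgrow
    rw [card_insert_of_notMem fun h => hhead (endpoints_mono hsub h)] at hcard
    have hT'card := card_erase_add_one ha
    rcases (T'.erase a).eq_empty_or_nonempty with he | he
    · have hT'a : T' = {a} := by
        rw [← insert_erase ha, he, insert_empty]
      subst hT'a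
      simp [endpoints_singleton, card_pair hloop]
    · have := h _ hsub he
      omega
  · exact h T' (fun x hx => (mem_insert.mp (hT' hx)).resolve_left (ne_of_mem_of_not_mem hx ha))
      hne

lemma UndirAcyclic.card_le_one {P Q : Finset A} {p q : W} (h : UndirAcyclic arcs P)
    (hQ : Q ⊆ P) (hends : endpoints arcs Q ⊆ {p, q}) : #Q ≤ 1 := by
  rcases Q.eq_empty_or_nonempty with rfl | hne
  · simp
  · have h1 := h Q hQ hne
    have h2 := (card_le_card hends).trans (card_le_two (a := p) (b := q))
    change #Q < #(endpoints arcs Q) at h1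
    omega

structure IsPartialArborescence (arcs : A → W × W) (r : W) (U : Finset W) (F : Finset A) :
    Prop where
  root_mem : r ∈ U
  endpoints_subset : endpoints arcs F ⊆ U
  acyclic : UndirAcyclic arcs F
  reach : ∀ v ∈ U, ReflTransGen (fun x y => ∃ a ∈ F, arcs a = (x, y)) r v

lemma isPartialArborescence_root : IsPartialArborescence arcs r {r} ∅ where
  root_mem := mem_singleton_self r
  endpoints_subset := by simp [endpoints]
  acyclic _ hT hne := absurd (subset_empty.mp hT) hne.ne_empty
  reach v hv := by rw [mem_singleton.mp hv]

lemma IsPartialArborescence.insert_arc [DecidableEq A] {U : Finset W} {F : Finset A} {a : A}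
    (h : IsPartialArborescence arcs r U F) (htail : (arcs a).1 ∈ U) (hhead : (arcs a).2 ∉ U) :
    IsPartialArborescence arcs r (insert (arcs a).2 U) (insert a F) where
  root_mem := mem_insert_of_mem h.root_mem
  endpoints_subset := by
    have := h.endpoints_subset
    simp only [endpoints, image_insert, subset_iff, mem_union, mem_insert, mem_image] at this ⊢
    grind
  acyclic := h.acyclic.insert_of_notMem_endpoints (ne_of_mem_of_not_mem htail hhead)
    fun hmem => hhead (h.endpoints_subset hmem)
  reach v hv := by
    have hmono : ReflTransGen (fun x y => ∃ b ∈ F, arcs b = (x, y)) ≤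
        ReflTransGen (fun x y => ∃ b ∈ insert a F, arcs b = (x, y)) :=
      ReflTransGen.mono fun x y ⟨b, hb, hxy⟩ => ⟨b, mem_insert_of_mem hb, hxy⟩
    rcases mem_insert.mp hv with rfl | hv
    · exact (hmono _ _ (h.reach _ htail)).tail ⟨a, mem_insert_self a F, rfl⟩
    · exact hmono _ _ (h.reach v hv)

lemma IsPartialArborescence.isArborescence [Fintype W] {F : Finset A}
    (h : IsPartialArborescence arcs r univ F) : IsArborescence arcs r F :=
  ⟨h.acyclic, fun v => h.reach v (mem_univ v)⟩

lemma IsKArborescence.union [DecidableEq A] {F T : Finset A} (hF : IsArborescence arcs r F)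
    (hT : IsKArborescence arcs r k T) (hFT : Disjoint F T) :
    IsKArborescence arcs r (k + 1) (F ∪ T) := by
  obtain ⟨P, hP, hdisj, rfl⟩ := hT
  refine ⟨Fin.cons F P, Fin.cases hF hP, ?_, ?_⟩
  · intro i j hij
    induction i using Fin.cases <;> induction j using Fin.cases
    · exact absurd rfl hij
    · exact hFT.mono_right (subset_biUnion_of_mem P (mem_univ _))
    · exact (hFT.mono_right (subset_biUnion_of_mem P (mem_univ _))).symm
    · exact hdisj _ _ fun h => hij (congrArg Fin.succ h)
  · rw [Fin.univ_succ, cons_eq_insert, biUnion_insert, map_eq_image, image_biUnion]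
    simp

end Arborescence

section Edmonds

open Finset

variable {W A : Type*} [Fintype W] [DecidableEq W] {arcs : A → W × W} {r : W} {k : ℕ}

variable (arcs) in
def IsRootedConnected (r : W) (k : ℕ) (S : Finset A) : Prop :=
  ∀ T : Finset W, r ∈ T → T ≠ univ → k ≤ #(outArcs arcs S T)

lemma IsRootedConnected.mono {S S' : Finset A} (h : IsRootedConnected arcs r k S)
    (hS : S ⊆ S') : IsRootedConnected arcs r k S' :=
  fun T hr hT => (h T hr hT).trans (card_le_card (outArcs_mono hS T))

lemma IsRootedConnected.of_le {S : Finset A} {k' : ℕ} (h : IsRootedConnected arcs r k S)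
    (hk : k' ≤ k) : IsRootedConnected arcs r k' S :=
  fun T hr hT => hk.trans (h T hr hT)

lemma IsRootedConnected.erase [DecidableEq A] {D : Finset A} {a : A}
    (hD : IsRootedConnected arcs r k D)
    (ha : ∀ T, r ∈ T → a ∈ outArcs arcs D T → k + 1 ≤ #(outArcs arcs D T)) :
    IsRootedConnected arcs r k (D.erase a) := by
  intro T hr hT
  rw [outArcs, filter_erase, ← outArcs]
  by_cases haT : a ∈ outArcs arcs D T
  · have := ha T hr haT
    rw [card_erase_of_mem haT]
    omega
  · rw [erase_eq_of_notMem haT]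
    exact hD T hr hT

lemma IsKArborescence.isRootedConnected [DecidableEq A] {T : Finset A}
    (h : IsKArborescence arcs r k T) : IsRootedConnected arcs r k T := by
  obtain ⟨P, hP, hdisj, rfl⟩ := h
  intro X hr hX
  obtain ⟨w, hw⟩ : ∃ w, w ∉ X := by
    by_contra! h
    exact hX (eq_univ_iff_forall.mpr h)
  have hcross : ∀ i, 1 ≤ #(outArcs arcs (P i) X) := fun i =>
    card_pos.mpr (outArcs_nonempty_of_reflTransGen ((hP i).2 w) hr hw)
  calc k = ∑ _i : Fin k, 1 := by simp
    _ ≤ ∑ i, #(outArcs arcs (P i) X) := sum_le_sum fun i _ => hcross i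
    _ = #(univ.biUnion fun i => outArcs arcs (P i) X) :=
      (card_biUnion fun i _ j _ hij => disjoint_filter_filter (hdisj i j hij)).symm
    _ = #(outArcs arcs (univ.biUnion P) X) := by rw [outArcs, filter_biUnion]; rfl

lemma exists_mem_outArcs_forall_lt_card_outArcs {D : Finset A} {U : Finset W} (hU : U ≠ univ)
    (hD : IsRootedConnected arcs r k D)
    (hDU : ∀ T, U ⊆ T → T ≠ univ → k + 1 ≤ #(outArcs arcs D T)) :
    ∃ a ∈ outArcs arcs D U,
      ∀ T, r ∈ T → a ∈ outArcs arcs D T → k + 1 ≤ #(outArcs arcs D T) := by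
  have ne_univ {x : W} {T : Finset W} (hx : x ∉ T) : T ≠ univ := fun h => hx (h ▸ mem_univ x)
  -- `∅` is admitted only so that the family of tight sets has a maximal member
  set C : Finset (Finset W) :=
    {T | T ∪ U ≠ univ ∧ #(outArcs arcs D T) ≤ k ∧ (r ∈ T ∨ T = ∅)}
  have hempty : ∅ ∈ C :=
    mem_filter.mpr ⟨mem_univ _, by simpa using hU, by simp [outArcs], .inr rfl⟩
  obtain ⟨M, hM⟩ := C.exists_maximal ⟨∅, hempty⟩
  obtain ⟨hMU, hMk, hMr⟩ := (mem_filter.mp hM.prop).2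
  obtain ⟨a, ha, htailM⟩ := exists_mem_outArcs_of_card_lt subset_union_left
    (hMk.trans_lt (hDU (M ∪ U) subset_union_right hMU))
  obtain ⟨haD, htail, hhead⟩ := mem_outArcs.mp ha
  have htailU : (arcs a).1 ∈ U := (mem_union.mp htail).resolve_left htailM
  have hheadM : (arcs a).2 ∉ M := fun h => hhead (mem_union_left U h)
  have hheadU : (arcs a).2 ∉ U := fun h => hhead (mem_union_right M h)
  refine ⟨a, mem_outArcs.mpr ⟨haD, htailU, hheadU⟩, fun T hr haT => ?_⟩
  by_contra! hTk
  obtain ⟨-, htailT, hheadT⟩ := mem_outArcs.mp haT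
  -- uncrossing `M` and `T` shows that `M ∪ T` is tight as well, contradicting maximality
  have hMTk : #(outArcs arcs D (M ∪ T)) ≤ k := by
    rcases hMr with hrM | rfl
    · have := card_outArcs_union_add_card_outArcs_inter_le arcs D M T
      have := hD (M ∩ T) (mem_inter.mpr ⟨hrM, hr⟩)
        (ne_univ fun h => hheadT (mem_inter.mp h).2)
      omega
    · rw [empty_union]
      omega
  have hMT : M ∪ T ∈ C := by
    refine mem_filter.mpr ⟨mem_univ _, ne_univ (x := (arcs a).2) ?_, hMTk, .inl ?_⟩
    · simp [hheadM, hheadT, hheadU]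
    · exact mem_union_right M hr
  exact htailM (hM.2 hMT subset_union_left (mem_union_right M htailT))

lemma exists_arc_extending [DecidableEq A] {S F : Finset A} {U : Finset W}
    (hS : IsRootedConnected arcs r (k + 1) S) (hF : IsPartialArborescence arcs r U F)
    (hU : U ≠ univ) (hSF : IsRootedConnected arcs r k (S \ F)) :
    ∃ a ∈ S \ F, (arcs a).1 ∈ U ∧ (arcs a).2 ∉ U ∧
      IsRootedConnected arcs r k (S \ insert a F) := by
  have hDU (T : Finset W) (hUT : U ⊆ T) (hT : T ≠ univ) :
      k + 1 ≤ #(outArcs arcs (S \ F) T) := by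
    refine (hS T (hUT hF.root_mem) hT).trans (card_le_card fun a ha => ?_)
    obtain ⟨haS, htail, hhead⟩ := mem_outArcs.mp ha
    refine mem_outArcs.mpr ⟨mem_sdiff.mpr ⟨haS, fun haF => hhead (hUT ?_)⟩, htail, hhead⟩
    exact hF.endpoints_subset (mem_union_right _ (mem_image_of_mem _ haF))
  obtain ⟨a, ha, hgood⟩ := exists_mem_outArcs_forall_lt_card_outArcs hU hSF hDU
  obtain ⟨haSF, htail, hhead⟩ := mem_outArcs.mp ha
  exact ⟨a, haSF, htail, hhead, sdiff_insert S F a ▸ hSF.erase hgood⟩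

lemma exists_arborescence_of_isPartialArborescence [DecidableEq A] {S F : Finset A}
    {U : Finset W} (hS : IsRootedConnected arcs r (k + 1) S)
    (hF : IsPartialArborescence arcs r U F) (hFS : F ⊆ S)
    (hSF : IsRootedConnected arcs r k (S \ F)) :
    ∃ B ⊆ S, IsArborescence arcs r B ∧ IsRootedConnected arcs r k (S \ B) := by
  by_cases hU : U = univ
  · subst hU
    exact ⟨F, hFS, hF.isArborescence, hSF⟩
  obtain ⟨a, ha, htail, hhead, hgood⟩ := exists_arc_extending hS hF hU hSF
  have : #U < #(insert (arcs a).2 U) := by rw [card_insert_of_notMem hhead]; omega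
  have := card_le_univ (insert (arcs a).2 U)
  exact exists_arborescence_of_isPartialArborescence hS (hF.insert_arc htail hhead)
    (insert_subset (mem_sdiff.mp ha).1 hFS) hgood
termination_by Fintype.card W - #U

/-- Edmonds' branching theorem. -/
theorem exists_isKArborescence_of_isRootedConnected [DecidableEq A] {S : Finset A}
    (h : IsRootedConnected arcs r k S) : ∃ T ⊆ S, IsKArborescence arcs r k T := by
  induction k generalizing S with
  | zero => exact ⟨∅, empty_subset S, finZeroElim, finZeroElim, by simp⟩
  | succ k ih =>
    obtain ⟨B, hBS, hB, hrest⟩ := exists_arborescence_of_isPartialArborescence h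
      isPartialArborescence_root (empty_subset S)
      ((sdiff_empty (s := S)).symm ▸ h.of_le k.le_succ)
    obtain ⟨T, hTS, hT⟩ := ih hrest
    exact ⟨B ∪ T, union_subset hBS (hTS.trans sdiff_subset),
      hT.union hB (disjoint_sdiff.mono_right hTS)⟩

end Edmonds

section Capacitated

open Finset

variable {V E : Type*} [DecidableEq V] {ends : E → V × V} {u : E → ℕ} {k : ℕ}

variable (u k) in
def capArcsOver (F : Finset E) : Finset (E × Fin k × Bool) :=
  {a ∈ F ×ˢ univ | (a.2.1 : ℕ) < u a.1}

lemma mem_capArcsOver {F : Finset E} {a : E × Fin k × Bool} :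
    a ∈ capArcsOver u k F ↔ a.1 ∈ F ∧ (a.2.1 : ℕ) < u a.1 := by
  simp [capArcsOver]

lemma subset_capArcsOver_image [DecidableEq E] {T : Finset (E × Fin k × Bool)}
    (hT : ∀ a ∈ T, (a.2.1 : ℕ) < u a.1) : T ⊆ capArcsOver u k (T.image Prod.fst) :=
  fun a ha => mem_capArcsOver.mpr ⟨mem_image_of_mem _ ha, hT a ha⟩

lemma mem_outArcs_capArcsOver {F : Finset E} {T : Finset V} {a : E × Fin k × Bool} :
    a ∈ outArcs (capArcEnds ends k) (capArcsOver u k F) T ↔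
      a.1 ∈ cutEdges ends F T ∧ (a.2.1 : ℕ) < u a.1 ∧
        a.2.2 = decide ((ends a.1).1 ∈ T) := by
  obtain ⟨e, i, b⟩ := a
  cases b <;> by_cases h1 : (ends e).1 ∈ T <;> by_cases h2 : (ends e).2 ∈ T <;>
    simp [mem_outArcs, mem_capArcsOver, cutEdges, capArcEnds, h1, h2, and_comm]

lemma card_outArcs_capArcsOver (hu : ∀ e, u e ≤ k) (F : Finset E) (T : Finset V) :
    #(outArcs (capArcEnds ends k) (capArcsOver u k F) T) = ∑ e ∈ cutEdges ends F T, u e := by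
  -- each edge across the cut contributes its `u e` copies oriented out of `T`
  calc _ = #((cutEdges ends F T).sigma fun e => ({i : Fin k | (i : ℕ) < u e} : Finset _)) := by
        refine card_bij' (fun a _ => ⟨a.1, a.2.1⟩)
          (fun x _ => (x.1, x.2, decide ((ends x.1).1 ∈ T))) ?_ ?_ ?_ ?_
        · intro a ha
          obtain ⟨hcut, hlt, -⟩ := mem_outArcs_capArcsOver.mp ha
          simpa using ⟨hcut, hlt⟩
        · rintro ⟨e, i⟩ hx
          simp only [mem_sigma, mem_filter, mem_univ, true_and] at hx
          exact mem_outArcs_capArcsOver.mpr ⟨hx.1, hx.2, rfl⟩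
        · intro a ha
          obtain ⟨-, -, hb⟩ := mem_outArcs_capArcsOver.mp ha
          simp [← hb]
        · intro x _
          rfl
    _ = ∑ e ∈ cutEdges ends F T, u e := by
        rw [card_sigma]
        exact sum_congr rfl fun e _ => by rw [Fin.card_filter_val_lt, min_eq_right (hu e)]

lemma cutEdges_compl [Fintype V] (F : Finset E) (R : Finset V) :
    cutEdges ends F Rᶜ = cutEdges ends F R := by
  ext e
  simp [cutEdges, not_iff_not]

lemma capFeasible_iff_isRootedConnected [Fintype V] (hu : ∀ e, u e ≤ k) (r : V)
    {F : Finset E} :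
    CapFeasible ends u k F ↔ IsRootedConnected (capArcEnds ends k) r k (capArcsOver u k F) := by
  simp only [IsRootedConnected, card_outArcs_capArcsOver hu]
  refine ⟨fun h T hr hT => h T ⟨r, hr⟩ hT, fun h R hne hR => ?_⟩
  by_cases hr : r ∈ R
  · exact h R hr hR
  · rw [← cutEdges_compl]
    exact h Rᶜ (mem_compl.mpr hr) (compl_ne_univ_iff_nonempty R |>.mpr hne)

lemma endpoints_filter_fst_eq_subset [DecidableEq E] (P : Finset (E × Fin k × Bool)) (e : E) :
    endpoints (capArcEnds ends k) {a ∈ P | a.1 = e} ⊆ {(ends e).1, (ends e).2} := by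
  simp only [endpoints, union_subset_iff, image_subset_iff, mem_filter, and_imp]
  constructor <;> rintro ⟨e', i, (_ | _)⟩ - rfl <;> simp [capArcEnds]

lemma IsKArborescence.card_filter_fst_eq_le [DecidableEq E] {T : Finset (E × Fin k × Bool)}
    {r : V}
    (hT : IsKArborescence (capArcEnds ends k) r k T) (e : E) : #{a ∈ T | a.1 = e} ≤ k := by
  obtain ⟨P, hP, -, rfl⟩ := hT
  rw [filter_biUnion]
  refine (card_biUnion_le_card_mul _ _ 1 fun i _ => ?_).trans (by simp)
  exact (hP i).1.card_le_one (filter_subset _ _) (endpoints_filter_fst_eq_subset (P i) e)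

lemma card_filter_fst_eq_le_two_mul [DecidableEq E] {T : Finset (E × Fin k × Bool)}
    (hT : ∀ a ∈ T, (a.2.1 : ℕ) < u a.1) (e : E) : #{a ∈ T | a.1 = e} ≤ 2 * u e := by
  calc #{a ∈ T | a.1 = e}
      ≤ #(({i : Fin k | (i : ℕ) < u e} : Finset _) ×ˢ (univ : Finset Bool)) := by
        refine card_le_card_of_injOn (fun a => a.2) (fun a ha => ?_) ?_
        · obtain ⟨haT, rfl⟩ := mem_filter.mp ha
          simpa using hT a haT
        · rintro ⟨e₁, x₁⟩ h₁ ⟨e₂, x₂⟩ h₂ (rfl : x₁ = x₂)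
          exact Prod.ext ((mem_filter.mp h₁).2.trans (mem_filter.mp h₂).2.symm) rfl
    _ ≤ 2 * u e := by
        rw [card_product, Fin.card_filter_val_lt, card_univ, Fintype.card_bool]
        omega

lemma IsKArborescence.sum_le_mul_sum_image [DecidableEq E] {T : Finset (E × Fin k × Bool)}
    {r : V}
    (hT : IsKArborescence (capArcEnds ends k) r k T) (hTu : ∀ a ∈ T, (a.2.1 : ℕ) < u a.1)
    {umax : ℕ} (humax : ∀ e, u e ≤ umax) {c : E → ℝ} (hc : ∀ e, 0 ≤ c e) :
    ∑ a ∈ T, c a.1 ≤ (min k (2 * umax) : ℕ) * ∑ e ∈ T.image Prod.fst, c e :=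
  sum_comp_le_mul_sum_image (fun e _ => hc e) fun e _ =>
    le_min (hT.card_filter_fst_eq_le e)
      ((card_filter_fst_eq_le_two_mul hTu e).trans (by have := humax e; omega))

end Capacitated

theorem stmt8_general {V E : Type*} [Fintype V] [DecidableEq V] [DecidableEq E]
    (ends : E → V × V)
    (u : E → ℕ) (c : E → ℝ) (hc : ∀ e, 0 ≤ c e)
    (k : ℕ) (hu : ∀ e, 1 ≤ u e ∧ u e ≤ k)
    (umax : ℕ) (humax₁ : ∀ e, u e ≤ umax)
    (r : V) (OPT : ℝ)
    (hOPT : IsLeast {x : ℝ | ∃ F : Finset E,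
      CapFeasible ends u k F ∧ x = ∑ e ∈ F, c e} OPT) :
    (∃ T : Finset (E × Fin k × Bool),
        (∀ a ∈ T, (a.2.1 : ℕ) < u a.1) ∧
        IsKArborescence (capArcEnds ends k) r k T) ∧
    ∀ T' : Finset (E × Fin k × Bool),
      (∀ a ∈ T', (a.2.1 : ℕ) < u a.1) →
      IsKArborescence (capArcEnds ends k) r k T' →
      (∀ T'' : Finset (E × Fin k × Bool),
        (∀ a ∈ T'', (a.2.1 : ℕ) < u a.1) →
        IsKArborescence (capArcEnds ends k) r k T'' →
        ∑ a ∈ T', c a.1 ≤ ∑ a ∈ T'', c a.1) →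
      CapFeasible ends u k (T'.image Prod.fst) ∧
        ∑ e ∈ T'.image Prod.fst, c e ≤ (min k (2 * umax) : ℕ) * OPT := by
  obtain ⟨F₀, hF₀, rfl⟩ := hOPT.1
  have huk (e : E) : u e ≤ k := (hu e).2
  obtain ⟨T₀, hT₀F₀, hT₀⟩ := exists_isKArborescence_of_isRootedConnected
    ((capFeasible_iff_isRootedConnected huk r).mp hF₀)
  have hT₀u : ∀ a ∈ T₀, (a.2.1 : ℕ) < u a.1 := fun a ha =>
    (mem_capArcsOver.mp (hT₀F₀ ha)).2
  refine ⟨⟨T₀, hT₀u, hT₀⟩, fun T hTu hT hmin => ⟨?_, ?_⟩⟩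
  · exact (capFeasible_iff_isRootedConnected huk r).mpr
      (hT.isRootedConnected.mono (subset_capArcsOver_image hTu))
  · calc ∑ e ∈ T.image Prod.fst, c e
        ≤ ∑ a ∈ T, c a.1 := Finset.sum_image_le_of_nonneg fun e _ => hc e
      _ ≤ ∑ a ∈ T₀, c a.1 := hmin T₀ hT₀u hT₀
      _ ≤ (min k (2 * umax) : ℕ) * ∑ e ∈ T₀.image Prod.fst, c e :=
        hT₀.sum_le_mul_sum_image hT₀u humax₁ hc
      _ ≤ (min k (2 * umax) : ℕ) * ∑ e ∈ F₀, c e := by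
        refine mul_le_mul_of_nonneg_left (Finset.sum_le_sum_of_subset_of_nonneg ?_
          fun e _ _ => hc e) (Nat.cast_nonneg _)
        exact Finset.image_subset_iff.mpr fun a ha => (mem_capArcsOver.mp (hT₀F₀ ha)).1

theorem stmt8 {V E : Type*} [Fintype V] [DecidableEq V] [Fintype E] [DecidableEq E]
    (ends : E → V × V) (hloop : ∀ e : E, (ends e).1 ≠ (ends e).2)
    (u : E → ℕ) (c : E → ℝ) (hc : ∀ e, 0 ≤ c e)
    (k : ℕ) (hk : 1 ≤ k) (hu : ∀ e, 1 ≤ u e ∧ u e ≤ k)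
    (umax : ℕ) (humax₁ : ∀ e, u e ≤ umax) (humax₂ : ∃ e, u e = umax)
    (r : V) (OPT : ℝ)
    (hOPT : IsLeast {x : ℝ | ∃ F : Finset E,
      CapFeasible ends u k F ∧ x = ∑ e ∈ F, c e} OPT) :
    (∃ T : Finset (E × Fin k × Bool),
        (∀ a ∈ T, (a.2.1 : ℕ) < u a.1) ∧
        IsKArborescence (capArcEnds ends k) r k T) ∧
    ∀ T' : Finset (E × Fin k × Bool),
      (∀ a ∈ T', (a.2.1 : ℕ) < u a.1) →
      IsKArborescence (capArcEnds ends k) r k T' →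
      (∀ T'' : Finset (E × Fin k × Bool),
        (∀ a ∈ T'', (a.2.1 : ℕ) < u a.1) →
        IsKArborescence (capArcEnds ends k) r k T'' →
        ∑ a ∈ T', c a.1 ≤ ∑ a ∈ T'', c a.1) →
      CapFeasible ends u k (T'.image Prod.fst) ∧
        ∑ e ∈ T'.image Prod.fst, c e ≤ (min k (2 * umax) : ℕ) * OPT :=
  stmt8_general ends u c hc k hu umax humax₁ r OPT hOPT
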